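/- arXiv:2012.06286 — 2 statements merged into one kernel-verified Lean document; each statement's English description precedes it below -/
import Mathlib

section
/- Let (x_n) be a normalized block sequence in (c₀₀, ‖·‖_{JT_{2,p}}). Then there exist an infinite set L ⊆ ℕ, an at most countable family of pairwise distinct branches (σ_i)_{i∈N} (N an initial interval of ℕ or N = ℕ) and a decreasing sequence of positive reals (c_i)_{i∈N} with ∑_{i∈N} c_i^p ≤ 1 such that lim_{n∈L} ‖x_n|_{σ_i}‖ = c_i > 0 for every i ∈ N, and lim_{n∈L} ‖x_n|_σ‖ = 0 for every branch σ ∉ {σ_i : i ∈ N}. -/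
open Set Filter Topology

/-- `k` is an immediate successor of `n` in the order `le`. -/
def ImmSucc (le : ℕ → ℕ → Prop) (n k : ℕ) : Prop :=
  le n k ∧ n ≠ k ∧ ∀ m, le n m → le m k → m = n ∨ m = k

/-- The tree `𝒯`: a partial order on `ℕ` compatible with the usual order, in which the set of
strict predecessors of every element is finite and linearly ordered, and every element has
infinitely many immediate successors. -/
structure IsJTTree (le : ℕ → ℕ → Prop) : Prop where
  refl : ∀ n, le n n
  antisymm : ∀ {m n}, le m n → le n m → m = n
  trans : ∀ {a b c}, le a b → le b c → le a c
  compat : ∀ {m n}, le m n → m ≤ n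
  pred_finite : ∀ n, {m | le m n ∧ m ≠ n}.Finite
  pred_linear : ∀ n a b, le a n → le b n → le a b ∨ le b a
  succ_infinite : ∀ n, {k | ImmSucc le n k}.Infinite

/-- A segment of the tree: a nonempty set of the form `{k : m ⪯ k ∧ k ⪯ n}`. -/
def IsSegment (le : ℕ → ℕ → Prop) (s : Set ℕ) : Prop :=
  ∃ m n, le m n ∧ s = {k | le m k ∧ le k n}

/-- A branch: a maximal linearly ordered subset of `ℕ`. -/
def IsBranch (le : ℕ → ℕ → Prop) (σ : Set ℕ) : Prop :=
  IsChain le σ ∧ ∀ τ, IsChain le τ → σ ⊆ τ → σ = τ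

/-- `‖x‖_s = (∑_{i ∈ s} x(i)²)^(1/2)`. -/
noncomputable def segNorm (x : ℕ → ℝ) (s : Set ℕ) : ℝ :=
  Real.sqrt (∑' i, s.indicator (fun j => (x j) ^ 2) i)

/-- The `JT_{2,p}` norm on finitely supported sequences:
`‖x‖ = sup {(∑_k ‖x‖_{s_k}^p)^(1/p) : s₁,…,s_n pairwise disjoint segments}`. -/
noncomputable def jtNorm (le : ℕ → ℕ → Prop) (p : ℝ) (x : ℕ → ℝ) : ℝ :=
  sSup { r : ℝ | ∃ (n : ℕ) (s : Fin n → Set ℕ),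
    (∀ k, IsSegment le (s k)) ∧
    (∀ k l, k ≠ l → Disjoint (s k) (s l)) ∧
    r = (∑ k : Fin n, segNorm x (s k) ^ p) ^ (1 / p) }

/-- A block sequence of finitely supported vectors. -/
def IsBlockSeq (x : ℕ → ℕ → ℝ) : Prop :=
  (∀ n, (Function.support (x n)).Finite) ∧
  ∀ n i j, x n i ≠ 0 → x (n + 1) j ≠ 0 → i < j

/-- The final segment `σ_{>l} = {k ∈ σ : k > l}`. -/
def finalSeg (σ : Set ℕ) (l : ℕ) : Set ℕ := {k ∈ σ | l < k}

/-- Two final segments are incomparable when their least elements are `le`-incomparable. -/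
def IncompFinal (le : ℕ → ℕ → Prop) (A B : Set ℕ) : Prop :=
  A.Nonempty ∧ B.Nonempty ∧ ¬ le (sInf A) (sInf B) ∧ ¬ le (sInf B) (sInf A)

/-- The sequence `(x n)` admits the `ℓ_p`-vector `(c i)_{i ∈ N}` with associated branches
`(σ i)_{i ∈ N}`, where `N` is an initial interval of `ℕ` or all of `ℕ`. -/
def AdmitsLpVector (le : ℕ → ℕ → Prop) (p : ℝ) (x : ℕ → ℕ → ℝ)
    (N : Set ℕ) (c : ℕ → ℝ) (σ : ℕ → Set ℕ) : Prop :=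
  (∀ i j, i ≤ j → j ∈ N → i ∈ N) ∧
  (∀ i ∈ N, IsBranch le (σ i)) ∧
  (∀ i ∈ N, ∀ j ∈ N, i ≠ j → σ i ≠ σ j) ∧
  (∀ i ∈ N, ∀ j ∈ N, i ≤ j → c j ≤ c i) ∧
  (∑' i : N, c i.1 ^ p) ≤ 1 ∧
  (∀ i ∈ N, 0 < c i ∧
    Tendsto (fun n => jtNorm le p ((σ i).indicator (x n))) atTop (nhds (c i))) ∧
  (∀ τ, IsBranch le τ → (∀ i ∈ N, τ ≠ σ i) →
    Tendsto (fun n => jtNorm le p (τ.indicator (x n))) atTop (nhds 0))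

/-!
On a branch `τ` the `JT_{2,p}` norm of `x|_τ` is at most the `ℓ₂` norm `‖x‖_τ`. Distinct branches
meet in a finite set, so the supports of late blocks meet finitely many distinct branches in
pieces spanning pairwise disjoint segments; hence for every finite family of distinct branches,
eventually `∑_τ ‖x_n|_τ‖^p ≤ 1`. By counting, for each `ε > 0` some subsequence has
`‖x_n|_τ‖ < ε` eventually for all but finitely many branches `τ`. A diagonal argument over
`ε = 1/(k+1)`, followed by Bolzano–Weierstrass on the countably many exceptional branches, gives a
subsequence along which `‖x_n|_τ‖` converges for every branch. The limits `c τ` have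
`∑ c τ ^ p ≤ 1` over finite families, so the positive ones can be listed in decreasing order.
-/

open Function

section Diagonal

variable {Φ : ℕ → ℕ → ℕ} (hΦ : ∀ k, ∃ ψ : ℕ → ℕ, StrictMono ψ ∧ Φ (k + 1) = Φ k ∘ ψ)
include hΦ

theorem exists_eq_comp_of_nested {k j : ℕ} (hkj : k ≤ j) :
    ∃ θ : ℕ → ℕ, (∀ m, m ≤ θ m) ∧ Φ j = Φ k ∘ θ := by
  induction j, hkj using Nat.le_induction with
  | base => exact ⟨id, fun _ => le_rfl, rfl⟩
  | succ j _ ih =>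
    obtain ⟨θ, hθ, hθeq⟩ := ih
    obtain ⟨ψ, hψ, hψeq⟩ := hΦ j
    exact ⟨θ ∘ ψ, fun m => hψ.le_apply.trans (hθ _), by rw [hψeq, hθeq]; rfl⟩

theorem strictMono_diag_of_nested (hΦ₀ : StrictMono (Φ 0)) : StrictMono fun n => Φ n n := by
  have hmono : ∀ k, StrictMono (Φ k) := by
    intro k
    induction k with
    | zero => exact hΦ₀
    | succ k ih =>
      obtain ⟨ψ, hψ, hψeq⟩ := hΦ k
      exact hψeq ▸ ih.comp hψ
  refine strictMono_nat_of_lt_succ fun n => ?_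
  obtain ⟨ψ, hψ, hψeq⟩ := hΦ n
  calc Φ n n < Φ n (n + 1) := hmono n n.lt_succ_self
    _ ≤ Φ n (ψ (n + 1)) := (hmono n).monotone hψ.le_apply
    _ = Φ (n + 1) (n + 1) := by rw [hψeq]; rfl

theorem eventually_diag_of_nested {P : ℕ → Prop} {k : ℕ} (hP : ∀ᶠ m in atTop, P (Φ k m)) :
    ∀ᶠ n in atTop, P (Φ n n) := by
  obtain ⟨M, hM⟩ := eventually_atTop.1 hP
  filter_upwards [eventually_ge_atTop k, eventually_ge_atTop M] with n hkn hMn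
  obtain ⟨θ, hθ, hθeq⟩ := exists_eq_comp_of_nested hΦ hkn
  rw [hθeq]
  exact hM _ (hMn.trans (hθ n))

end Diagonal

theorem exists_subseq_tendsto_of_countable {α : Type*} {Q : Set α} (hQ : Q.Countable)
    {K : Set ℝ} (hK : IsCompact K) {u : ℕ → α → ℝ} (hu : ∀ n, ∀ τ ∈ Q, u n τ ∈ K) :
    ∃ θ : ℕ → ℕ, StrictMono θ ∧ ∀ τ ∈ Q, ∃ c, Tendsto (fun n => u (θ n) τ) atTop (𝓝 c) := by
  have := hQ.to_subtype
  have := isCompact_iff_compactSpace.1 hK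
  obtain ⟨c, θ, hθ, hlim⟩ :=
    CompactSpace.tendsto_subseq fun n (τ : Q) => (⟨u n τ, hu n τ τ.2⟩ : K)
  exact ⟨θ, hθ, fun τ hτ =>
    ⟨c ⟨τ, hτ⟩, (continuous_subtype_val.tendsto _).comp (tendsto_pi_nhds.1 hlim ⟨τ, hτ⟩)⟩⟩

section Extraction

variable {α : Type*} {p : ℝ}

theorem Finset.card_mul_rpow_le_one {s : Finset α} {a : α → ℝ} {ε : ℝ}
    (hε : 0 < ε) (hp : 0 ≤ p) (ha : ∀ i ∈ s, ε ≤ a i) (hs : ∑ i ∈ s, a i ^ p ≤ 1) :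
    (s.card : ℝ) * ε ^ p ≤ 1 :=
  calc (s.card : ℝ) * ε ^ p = s.card • ε ^ p := (nsmul_eq_mul _ _).symm
    _ ≤ ∑ i ∈ s, a i ^ p :=
      s.card_nsmul_le_sum _ _ fun i hi => Real.rpow_le_rpow hε.le (ha i hi) hp
    _ ≤ 1 := hs

def EventuallyInLpBall (p : ℝ) (S : Set α) (u : ℕ → α → ℝ) : Prop :=
  ∀ F : Finset α, ↑F ⊆ S → ∀ᶠ n in atTop, ∑ τ ∈ F, u n τ ^ p ≤ 1

namespace EventuallyInLpBall

variable {S : Set α} {u : ℕ → α → ℝ}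

theorem comp_tendsto (h : EventuallyInLpBall p S u) {φ : ℕ → ℕ} (hφ : Tendsto φ atTop atTop) :
    EventuallyInLpBall p S fun n => u (φ n) :=
  fun F hF => hφ.eventually (h F hF)

theorem exists_subseq_eventually_lt (h : EventuallyInLpBall p S u) (hp : 0 ≤ p) {ε : ℝ}
    (hε : 0 < ε) : ∃ ψ : ℕ → ℕ, StrictMono ψ ∧
      ∃ P : Finset α, ∀ τ ∈ S, τ ∉ P → ∀ᶠ n in atTop, u (ψ n) τ < ε := by
  classical
  by_contra! hbig
  have grow : ∀ m : ℕ, ∃ ψ : ℕ → ℕ, StrictMono ψ ∧ ∃ P : Finset α, ↑P ⊆ S ∧ P.card = m ∧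
      ∀ τ ∈ P, ∀ n, ε ≤ u (ψ n) τ := by
    intro m
    induction m with
    | zero => exact ⟨id, strictMono_id, ∅, by simp, rfl, by simp⟩
    | succ m ih =>
      obtain ⟨ψ, hψ, P, hPS, hcard, hP⟩ := ih
      obtain ⟨τ, hτS, hτP, hfreq⟩ := hbig ψ hψ P
      obtain ⟨θ, hθ, hθτ⟩ := extraction_of_frequently_atTop hfreq
      refine ⟨ψ ∘ θ, hψ.comp hθ, insert τ P, ?_, by rw [Finset.card_insert_of_notMem hτP, hcard],
        ?_⟩
      · rw [Finset.coe_insert]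
        exact insert_subset hτS hPS
      · intro σ hσ n
        rcases Finset.mem_insert.1 hσ with rfl | hσP
        · exact hθτ n
        · exact hP σ hσP (θ n)
  obtain ⟨m, hm⟩ := exists_nat_gt (ε ^ p)⁻¹
  obtain ⟨ψ, hψ, P, hPS, hcard, hP⟩ := grow m
  obtain ⟨n, hn⟩ := (hψ.tendsto_atTop.eventually (h P hPS)).exists
  have := Finset.card_mul_rpow_le_one hε hp (fun τ hτ => hP τ hτ n) hn
  rw [hcard] at this
  linarith [(inv_lt_iff_one_lt_mul₀ (Real.rpow_pos_of_pos hε p)).1 hm]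

theorem exists_subseq_forall_eventually_lt (h : EventuallyInLpBall p S u) (hp : 0 ≤ p) :
    ∃ l : ℕ → ℕ, StrictMono l ∧ ∀ k : ℕ,
      ∃ P : Finset α, ∀ τ ∈ S, τ ∉ P → ∀ᶠ n in atTop, u (l n) τ < 1 / (k + 1) := by
  have step (k : ℕ) (φ : {φ : ℕ → ℕ // StrictMono φ}) := (h.comp_tendsto
    φ.2.tendsto_atTop).exists_subseq_eventually_lt hp (Nat.one_div_pos_of_nat (n := k))
  choose ψ hψ P hP using step
  let Φ : ℕ → {φ : ℕ → ℕ // StrictMono φ} := fun k =>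
    Nat.rec ⟨id, strictMono_id⟩ (fun k φ => ⟨φ.1 ∘ ψ k φ, φ.2.comp (hψ k φ)⟩) k
  have hΦ (k : ℕ) : ∃ θ : ℕ → ℕ, StrictMono θ ∧ (Φ (k + 1)).1 = (Φ k).1 ∘ θ :=
    ⟨ψ k (Φ k), hψ k (Φ k), rfl⟩
  refine ⟨fun n => (Φ n).1 n, strictMono_diag_of_nested hΦ strictMono_id, fun k =>
    ⟨P k (Φ k), fun τ hτS hτP =>
      eventually_diag_of_nested (Φ := fun k => (Φ k).1) (P := fun m => u m τ < 1 / (k + 1)) hΦ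
        (k := k + 1) (hP k (Φ k) τ hτS hτP)⟩⟩

theorem exists_subseq_tendsto (h : EventuallyInLpBall p S u) (hp : 0 ≤ p)
    (hu : ∀ n, ∀ τ ∈ S, u n τ ∈ Icc 0 1) :
    ∃ l : ℕ → ℕ, StrictMono l ∧
      ∃ c : α → ℝ, ∀ τ ∈ S, Tendsto (fun n => u (l n) τ) atTop (𝓝 (c τ)) := by
  obtain ⟨l, hl, hsmall⟩ := h.exists_subseq_forall_eventually_lt hp
  choose P hP using hsmall
  -- off the countable set `⋃ k, P k` everything tends to `0` along `l`; on it, Bolzano–Weierstrass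
  set Q := S ∩ ⋃ k, (P k : Set α)
  have hQ : Q.Countable :=
    (countable_iUnion fun k => (P k).countable_toSet).mono inter_subset_right
  obtain ⟨θ, hθ, hθQ⟩ := exists_subseq_tendsto_of_countable hQ isCompact_Icc
    fun n τ hτ => hu (l n) τ hτ.1
  have hlim : ∀ τ ∈ S, ∃ c, Tendsto (fun n => u (l (θ n)) τ) atTop (𝓝 c) := by
    intro τ hτ
    by_cases hτQ : τ ∈ Q
    · exact hθQ τ hτQ
    refine ⟨0, (?_ : Tendsto (fun n => u (l n) τ) atTop (𝓝 0)).comp hθ.tendsto_atTop⟩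
    simp only [Q, mem_inter_iff, mem_iUnion, Finset.mem_coe, not_and, not_exists] at hτQ
    refine tendsto_order.2 ⟨fun a ha => Eventually.of_forall fun n => ha.trans_le (hu _ τ hτ).1,
      fun ε hε => ?_⟩
    obtain ⟨k, hk⟩ := exists_nat_one_div_lt hε
    exact (hP k τ hτ (hτQ hτ k)).mono fun n hn => hn.trans hk
  choose! c hc using hlim
  exact ⟨l ∘ θ, hl.comp hθ, c, hc⟩

theorem sum_rpow_le_one_of_tendsto (h : EventuallyInLpBall p S u) (hp : 0 ≤ p) {l : ℕ → ℕ}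
    (hl : Tendsto l atTop atTop) {c : α → ℝ}
    (hc : ∀ τ ∈ S, Tendsto (fun n => u (l n) τ) atTop (𝓝 (c τ))) {F : Finset α} (hF : ↑F ⊆ S) :
    ∑ τ ∈ F, c τ ^ p ≤ 1 :=
  le_of_tendsto (tendsto_finsetSum F fun τ hτ => (hc τ (hF hτ)).rpow_const (Or.inr hp))
    (hl.eventually (h F hF))

end EventuallyInLpBall

end Extraction

theorem exists_strictMonoOn_enum {β : Type*} [LinearOrder β] [Nonempty β] {T : Set β}
    (hT : ∀ b ∈ T, {a ∈ T | a < b}.Finite) :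
    ∃ N : Set ℕ, (∀ i j, i ≤ j → j ∈ N → i ∈ N) ∧ ∃ e : ℕ → β, StrictMonoOn e N ∧ e '' N = T := by
  -- enumerate `T` by rank, the number of smaller elements
  set r : β → ℕ := fun b => {a ∈ T | a < b}.ncard
  have hr : StrictMonoOn r T := fun a ha b hb hab =>
    ncard_lt_ncard ⟨fun x hx => ⟨hx.1, hx.2.trans hab⟩, fun h => (h ⟨ha, hab⟩).2.false⟩ (hT b hb)
  have hIio : ∀ b ∈ T, r '' {a ∈ T | a < b} = Iio (r b) := fun b hb =>
    eq_of_subset_of_ncard_le (image_subset_iff.2 fun a ha => hr ha.1 hb ha.2)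
      (by rw [ncard_Iio_nat, (hr.injOn.mono (sep_subset _ _)).ncard_image]) (finite_Iio _)
  refine ⟨r '' T, ?_, Function.invFunOn r T, ?_, hr.injOn.leftInvOn_invFunOn.image_image⟩
  · rintro i j hij ⟨b, hb, rfl⟩
    rcases hij.lt_or_eq with hlt | rfl
    · rw [← mem_Iio, ← hIio b hb] at hlt
      exact image_mono (sep_subset _ _) hlt
    · exact mem_image_of_mem r hb
  · rintro _ ⟨a, ha, rfl⟩ _ ⟨b, hb, rfl⟩ hab
    rwa [hr.injOn.leftInvOn_invFunOn ha, hr.injOn.leftInvOn_invFunOn hb, ← hr.lt_iff_lt ha hb]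

theorem exists_antitoneOn_enum {α : Type*} [Nonempty α] {T : Set α} {c : α → ℝ}
    (hT : ∀ ε > 0, {τ ∈ T | ε ≤ c τ}.Finite) (hpos : ∀ τ ∈ T, 0 < c τ) :
    ∃ N : Set ℕ, (∀ i j, i ≤ j → j ∈ N → i ∈ N) ∧ ∃ σ : ℕ → α, InjOn σ N ∧ σ '' N = T ∧
      ∀ i ∈ N, ∀ j ∈ N, i ≤ j → c (σ j) ≤ c (σ i) := by
  -- sort `T` lexicographically: by decreasing `c`, ties broken by a well-order of `α`
  let _ := IsWellOrder.linearOrder (WellOrderingRel (α := α))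
  set key : α → ℝᵒᵈ ×ₗ α := fun τ => toLex (OrderDual.toDual (c τ), τ)
  have hkey : Function.Injective key := fun a b h => congrArg (fun x => (ofLex x).2) h
  obtain ⟨N, hN, e, he, himg⟩ := exists_strictMonoOn_enum (T := key '' T) <| by
    rintro _ ⟨τ, hτ, rfl⟩
    refine ((hT (c τ) (hpos τ hτ)).image key).subset ?_
    rintro _ ⟨⟨τ', hτ', rfl⟩, hlt⟩
    exact ⟨τ', ⟨hτ', Prod.Lex.monotone_fst _ _ hlt.le⟩, rfl⟩
  set σ : ℕ → α := fun i => (ofLex (e i)).2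
  have hσ : ∀ i ∈ N, key (σ i) = e i := by
    intro i hi
    obtain ⟨τ, -, hτ⟩ := himg.subset (mem_image_of_mem e hi)
    show key (ofLex (e i)).2 = e i
    rw [← hτ]
    rfl
  refine ⟨N, hN, σ, fun i hi j hj h => he.injOn hi hj ?_, ?_, fun i hi j hj hij => ?_⟩
  · rw [← hσ i hi, ← hσ j hj, h]
  · apply hkey.image_injective
    rw [← himg, ← image_comp]
    exact image_congr hσ
  · have := Prod.Lex.monotone_fst _ _ (he.monotoneOn hi hj hij)
    rwa [← hσ i hi, ← hσ j hj] at this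

theorem finite_setOf_le_of_sum_rpow_le_one {α : Type*} {p : ℝ} (hp : 0 ≤ p) {S : Set α}
    {c : α → ℝ} (hc : ∀ F : Finset α, ↑F ⊆ S → ∑ τ ∈ F, c τ ^ p ≤ 1) {ε : ℝ} (hε : 0 < ε) :
    {τ ∈ S | ε ≤ c τ}.Finite := by
  by_contra hinf
  obtain ⟨m, hm⟩ := exists_nat_gt (ε ^ p)⁻¹
  obtain ⟨F, hF, hcard⟩ := Set.Infinite.exists_subset_card_eq hinf m
  have := Finset.card_mul_rpow_le_one hε hp (fun τ hτ => (hF hτ).2)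
    (hc F fun τ hτ => (hF hτ).1)
  rw [hcard] at this
  linarith [(inv_lt_iff_one_lt_mul₀ (Real.rpow_pos_of_pos hε p)).1 hm]

theorem exists_antitoneOn_enum_of_sum_rpow_le_one {α : Type*} [Nonempty α] {p : ℝ} (hp : 0 ≤ p)
    {S : Set α} {c : α → ℝ} (hc : ∀ F : Finset α, ↑F ⊆ S → ∑ τ ∈ F, c τ ^ p ≤ 1) :
    ∃ N : Set ℕ, (∀ i j, i ≤ j → j ∈ N → i ∈ N) ∧ ∃ σ : ℕ → α, InjOn σ N ∧
      σ '' N = {τ ∈ S | 0 < c τ} ∧ (∀ i ∈ N, ∀ j ∈ N, i ≤ j → c (σ j) ≤ c (σ i)) ∧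
      ∑' i : N, c (σ i) ^ p ≤ 1 := by
  obtain ⟨N, hN, σ, hinj, himg, hanti⟩ := exists_antitoneOn_enum (T := {τ ∈ S | 0 < c τ})
    (fun ε hε => (finite_setOf_le_of_sum_rpow_le_one hp hc hε).subset fun τ hτ => ⟨hτ.1.1, hτ.2⟩)
    fun τ hτ => hτ.2
  have hσ (i : N) : σ i ∈ S ∧ 0 < c (σ i) := by
    have := mem_image_of_mem σ i.2
    rwa [himg] at this
  refine ⟨N, hN, σ, hinj, himg, hanti,
    Real.tsum_le_of_sum_le (fun i => Real.rpow_nonneg (hσ i).2.le p) fun F => ?_⟩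
  classical
  rw [← Finset.sum_image (f := fun τ => c τ ^ p) fun i _ j _ h => Subtype.ext (hinj i.2 j.2 h)]
  refine hc _ fun τ hτ => ?_
  obtain ⟨i, -, rfl⟩ := Finset.mem_image.1 hτ
  exact (hσ i).1

namespace IsJTTree
variable {le : ℕ → ℕ → Prop} (hT : IsJTTree le)
include hT

theorem mem_branch_of_le {τ : Set ℕ} (hτ : IsBranch le τ) {a b : ℕ} (hb : b ∈ τ) (hab : le a b) :
    a ∈ τ := by
  have hchain : IsChain le (insert a τ) := by
    refine hτ.1.insert fun t ht _ => ?_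
    rcases eq_or_ne t b with rfl | htb
    · exact Or.inl hab
    rcases hτ.1 ht hb htb with htb | hbt
    · exact hT.pred_linear b a t hab htb
    · exact Or.inl (hT.trans hab hbt)
  exact hτ.2 _ hchain (subset_insert a τ) ▸ mem_insert a τ

theorem inter_branch_finite {σ τ : Set ℕ} (hσ : IsBranch le σ) (hτ : IsBranch le τ)
    (hne : σ ≠ τ) : (σ ∩ τ).Finite := by
  obtain ⟨a, haσ, haτ⟩ := not_subset.1 fun h => hne (hσ.2 τ hτ.1 h)
  refine (finite_Iic a).subset ?_
  rintro k ⟨hkσ, hkτ⟩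
  rw [mem_Iic]
  rcases eq_or_ne k a with rfl | hka
  · exact le_rfl
  rcases hσ.1 hkσ haσ hka with hle | hle
  · exact hT.compat hle
  · exact absurd (hT.mem_branch_of_le hτ hkτ hle) haτ

theorem exists_segment_superset_inter {τ : Set ℕ} (hτ : IsBranch le τ) {A : Set ℕ} (hA : A.Finite)
    (hne : (τ ∩ A).Nonempty) : ∃ m M, le m M ∧ m ∈ τ ∩ A ∧
      {k | le m k ∧ le k M} ⊆ τ ∧ τ ∩ A ⊆ {k | le m k ∧ le k M} := by
  -- on the chain `τ ∩ A` the order `le` agrees with `≤`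
  have hfin := hA.inter_of_right τ
  have hcmp : ∀ a ∈ τ ∩ A, ∀ b ∈ τ ∩ A, a ≤ b → le a b := by
    intro a ha b hb hab
    rcases eq_or_ne a b with rfl | hne
    · exact hT.refl a
    rcases hτ.1 ha.1 hb.1 hne with h | h
    · exact h
    · exact absurd (le_antisymm hab (hT.compat h)) hne
  set m := hfin.toFinset.min' (hfin.toFinset_nonempty.2 hne)
  set M := hfin.toFinset.max' (hfin.toFinset_nonempty.2 hne)
  have hm : m ∈ τ ∩ A := hfin.mem_toFinset.1 (Finset.min'_mem _ _)
  have hM : M ∈ τ ∩ A := hfin.mem_toFinset.1 (Finset.max'_mem _ _)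
  have hseg : τ ∩ A ⊆ {k | le m k ∧ le k M} := fun k hk =>
    ⟨hcmp m hm k hk (Finset.min'_le _ _ (hfin.mem_toFinset.2 hk)),
      hcmp k hk M hM (Finset.le_max' _ _ (hfin.mem_toFinset.2 hk))⟩
  exact ⟨m, M, (hseg hM).1, hm, fun k hk => hT.mem_branch_of_le hτ hM.1 hk.2, hseg⟩

theorem disjoint_segments {m M m' M' : ℕ} (h : m ∉ {k | le m' k ∧ le k M'})
    (h' : m' ∉ {k | le m k ∧ le k M}) :
    Disjoint {k | le m k ∧ le k M} {k | le m' k ∧ le k M'} := by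
  refine disjoint_left.2 fun k ⟨hmk, hkM⟩ ⟨hm'k, hkM'⟩ => ?_
  rcases hT.pred_linear k m m' hmk hm'k with hmm' | hm'm
  · exact h' ⟨hmm', hT.trans hm'k hkM⟩
  · exact h ⟨hm'm, hT.trans hmk hkM'⟩

end IsJTTree

theorem Finset.sum_rpow_le_rpow_sum {ι : Type*} (s : Finset ι) {f : ι → ℝ}
    (hf : ∀ i ∈ s, 0 ≤ f i) {q : ℝ} (hq : 1 ≤ q) : ∑ i ∈ s, f i ^ q ≤ (∑ i ∈ s, f i) ^ q := by
  classical
  induction s using Finset.induction_on with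
  | empty => simp [Real.zero_rpow (by linarith : q ≠ 0)]
  | insert a s ha ih =>
    have hf' : ∀ i ∈ s, 0 ≤ f i := fun i hi => hf i (Finset.mem_insert_of_mem hi)
    rw [Finset.sum_insert ha, Finset.sum_insert ha]
    calc f a ^ q + ∑ i ∈ s, f i ^ q ≤ f a ^ q + (∑ i ∈ s, f i) ^ q := by gcongr; exact ih hf'
      _ ≤ (f a + ∑ i ∈ s, f i) ^ q :=
        Real.add_rpow_le_rpow_add (hf a (Finset.mem_insert_self a s)) (Finset.sum_nonneg hf') hq

section SegNorm

variable {y : ℕ → ℝ}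

theorem segNorm_nonneg (y : ℕ → ℝ) (s : Set ℕ) : 0 ≤ segNorm y s := Real.sqrt_nonneg _

theorem segNorm_sq (y : ℕ → ℝ) (s : Set ℕ) :
    segNorm y s ^ 2 = ∑' i, s.indicator (fun j => y j ^ 2) i :=
  Real.sq_sqrt (tsum_nonneg fun i => indicator_nonneg (fun j _ => sq_nonneg (y j)) i)

theorem summable_indicator_sq (hy : (support y).Finite) (s : Set ℕ) :
    Summable (s.indicator fun j => y j ^ 2) :=
  summable_of_hasFiniteSupport <| hy.subset fun i hi => by
    contrapose! hi
    simp [notMem_support.1 hi]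

theorem segNorm_congr {s t : Set ℕ} (h : s ∩ support y = t ∩ support y) :
    segNorm y s = segNorm y t := by
  classical
  unfold segNorm
  congr 2
  ext i
  by_cases hi : y i = 0
  · simp [indicator_apply, hi]
  · have := congrArg (i ∈ ·) h
    simp only [mem_inter_iff, mem_support, ne_eq, hi, not_false_eq_true, and_true,
      eq_iff_iff] at this
    simp [indicator_apply, this]

theorem segNorm_indicator (y : ℕ → ℝ) (τ s : Set ℕ) :
    segNorm (τ.indicator y) s = segNorm y (s ∩ τ) := by
  classical
  unfold segNorm
  congr 2
  ext i
  by_cases hs : i ∈ s <;> by_cases hτ : i ∈ τ <;> simp [indicator_apply, hs, hτ]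

theorem segNorm_eq_zero {s : Set ℕ} (h : Disjoint s (support y)) : segNorm y s = 0 := by
  rw [segNorm_congr (t := ∅) (by rw [h.inter_eq, empty_inter])]
  simp [segNorm]

theorem sum_segNorm_sq_le (hy : (support y).Finite) {ι : Type*} (I : Finset ι) {s : ι → Set ℕ}
    (hs : (I : Set ι).PairwiseDisjoint s) {t : Set ℕ} (hst : ∀ k ∈ I, s k ⊆ t) :
    ∑ k ∈ I, segNorm y (s k) ^ 2 ≤ segNorm y t ^ 2 := by
  simp only [segNorm_sq]
  rw [← Summable.tsum_finsetSum fun k _ => summable_indicator_sq hy _]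
  refine Summable.tsum_le_tsum (fun i => ?_) (summable_sum fun k _ => summable_indicator_sq hy _)
    (summable_indicator_sq hy t)
  rw [← Finset.indicator_biUnion_apply I s hs]
  exact indicator_le_indicator_of_subset (iUnion₂_subset hst) (fun j => sq_nonneg _) i

theorem sum_segNorm_rpow_le {p : ℝ} (hp : 2 ≤ p) (hy : (support y).Finite) {ι : Type*}
    (I : Finset ι) {s : ι → Set ℕ} (hs : (I : Set ι).PairwiseDisjoint s) {t : Set ℕ}
    (hst : ∀ k ∈ I, s k ⊆ t) : ∑ k ∈ I, segNorm y (s k) ^ p ≤ segNorm y t ^ p := by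
  have hsq (a : ℝ) (ha : 0 ≤ a) : a ^ p = (a ^ 2) ^ (p / 2) := by
    rw [← Real.rpow_two, ← Real.rpow_mul ha]
    ring_nf
  calc ∑ k ∈ I, segNorm y (s k) ^ p = ∑ k ∈ I, (segNorm y (s k) ^ 2) ^ (p / 2) :=
        Finset.sum_congr rfl fun k _ => hsq _ (segNorm_nonneg y _)
    _ ≤ (∑ k ∈ I, segNorm y (s k) ^ 2) ^ (p / 2) :=
        I.sum_rpow_le_rpow_sum (fun k _ => sq_nonneg _) (by linarith)
    _ ≤ (segNorm y t ^ 2) ^ (p / 2) :=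
        Real.rpow_le_rpow (Finset.sum_nonneg fun k _ => sq_nonneg _) (sum_segNorm_sq_le hy I hs hst)
          (by linarith)
    _ = segNorm y t ^ p := (hsq _ (segNorm_nonneg y t)).symm

end SegNorm

section JTNorm

variable {le : ℕ → ℕ → Prop} {p : ℝ} {y : ℕ → ℝ}

theorem rpow_sum_segNorm_le (hp : 2 ≤ p) (hy : (support y).Finite) {ι : Type*} [Fintype ι]
    {s : ι → Set ℕ} (hs : Pairwise (Disjoint on s)) (t : Set ℕ) (hst : ∀ k, s k ⊆ t) :
    (∑ k, segNorm y (s k) ^ p) ^ (1 / p) ≤ segNorm y t := by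
  have hp0 : 0 < p := by linarith
  calc (∑ k, segNorm y (s k) ^ p) ^ (1 / p) ≤ (segNorm y t ^ p) ^ (1 / p) :=
        Real.rpow_le_rpow (Finset.sum_nonneg fun k _ => Real.rpow_nonneg (segNorm_nonneg y _) p)
          (sum_segNorm_rpow_le hp hy _ (hs.set_pairwise _) fun k _ => hst k) (by positivity)
    _ = segNorm y t := by rw [one_div, Real.rpow_rpow_inv (segNorm_nonneg y t) hp0.ne']

theorem le_jtNorm (hp : 2 ≤ p) (hy : (support y).Finite) {ι : Type*} [Fintype ι]
    {s : ι → Set ℕ} (hseg : ∀ k, IsSegment le (s k)) (hs : Pairwise (Disjoint on s)) :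
    (∑ k, segNorm y (s k) ^ p) ^ (1 / p) ≤ jtNorm le p y := by
  set e := Fintype.equivFin ι
  refine le_csSup ⟨segNorm y univ, ?_⟩ ⟨Fintype.card ι, s ∘ e.symm, fun k => hseg _,
    fun k l hkl => hs (e.symm.injective.ne hkl),
    by simp only [Function.comp_apply, e.symm.sum_comp fun k => segNorm y (s k) ^ p]⟩
  rintro _ ⟨n, s, -, hs, rfl⟩
  exact rpow_sum_segNorm_le hp hy hs univ fun _ => subset_univ _

theorem sum_segNorm_rpow_le_jtNorm_rpow (hp : 2 ≤ p) (hy : (support y).Finite) {ι : Type*}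
    [Fintype ι] {s : ι → Set ℕ} (hseg : ∀ k, IsSegment le (s k)) (hs : Pairwise (Disjoint on s)) :
    ∑ k, segNorm y (s k) ^ p ≤ jtNorm le p y ^ p := by
  have hp0 : 0 < p := by linarith
  have hnonneg : 0 ≤ ∑ k, segNorm y (s k) ^ p :=
    Finset.sum_nonneg fun k _ => Real.rpow_nonneg (segNorm_nonneg y _) p
  calc ∑ k, segNorm y (s k) ^ p = ((∑ k, segNorm y (s k) ^ p) ^ (1 / p)) ^ p := by
        rw [← Real.rpow_mul hnonneg, one_div_mul_cancel hp0.ne', Real.rpow_one]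
    _ ≤ jtNorm le p y ^ p :=
        Real.rpow_le_rpow (Real.rpow_nonneg hnonneg _) (le_jtNorm hp hy hseg hs) hp0.le

theorem jtNorm_le_of_forall {C : ℝ}
    (h : ∀ (n : ℕ) (s : Fin n → Set ℕ), (∀ k, IsSegment le (s k)) →
      (∀ k l, k ≠ l → Disjoint (s k) (s l)) → (∑ k, segNorm y (s k) ^ p) ^ (1 / p) ≤ C) :
    jtNorm le p y ≤ C := by
  refine csSup_le ⟨_, 0, Fin.elim0, fun k => k.elim0, fun k => k.elim0, rfl⟩ ?_
  rintro _ ⟨n, s, hseg, hs, rfl⟩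
  exact h n s hseg hs

theorem jtNorm_nonneg (hp : 2 ≤ p) (hy : (support y).Finite) : 0 ≤ jtNorm le p y := by
  have := le_jtNorm (le := le) hp hy (s := (Fin.elim0 : Fin 0 → Set ℕ)) (fun k => k.elim0)
    fun k => k.elim0
  rwa [Finset.univ_eq_empty, Finset.sum_empty, Real.zero_rpow (by positivity)] at this

theorem jtNorm_indicator_le_segNorm (hp : 2 ≤ p) (hy : (support y).Finite) (τ : Set ℕ) :
    jtNorm le p (τ.indicator y) ≤ segNorm y τ :=
  jtNorm_le_of_forall fun n s _ hs => by
    simp_rw [segNorm_indicator]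
    exact rpow_sum_segNorm_le hp hy (fun k l hkl => (hs k l hkl).mono inter_subset_left
      inter_subset_left) τ fun k => inter_subset_right

theorem support_nonempty_of_jtNorm_ne_zero (hp : 2 ≤ p) (h : jtNorm le p y ≠ 0) :
    (support y).Nonempty := by
  by_contra hy
  rw [not_nonempty_iff_eq_empty] at hy
  have hzero : (∅ : Set ℕ).indicator y = y := by
    rw [indicator_empty, support_eq_empty_iff.1 hy]
    rfl
  have := jtNorm_indicator_le_segNorm (le := le) hp (hy ▸ finite_empty) ∅
  rw [hzero, segNorm_eq_zero (empty_disjoint _)] at this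
  exact h (le_antisymm this (jtNorm_nonneg hp (hy ▸ finite_empty)))

theorem sum_segNorm_rpow_le_jtNorm_rpow_of_isBranch (hT : IsJTTree le) (hp : 2 ≤ p)
    (hy : (support y).Finite) {F : Finset (Set ℕ)} (hF : ∀ τ ∈ F, IsBranch le τ)
    (hdisj : (F : Set (Set ℕ)).PairwiseDisjoint (· ∩ support y)) :
    ∑ τ ∈ F, segNorm y τ ^ p ≤ jtNorm le p y ^ p := by
  classical
  have hp0 : 0 < p := by linarith
  set F' := F.filter fun τ => (τ ∩ support y).Nonempty
  have hsum : ∑ τ ∈ F', segNorm y τ ^ p = ∑ τ ∈ F, segNorm y τ ^ p := by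
    refine Finset.sum_filter_of_ne fun τ _ h => ?_
    by_contra hempty
    rw [segNorm_eq_zero (disjoint_iff_inter_eq_empty.2 (not_nonempty_iff_eq_empty.1 hempty)),
      Real.zero_rpow hp0.ne'] at h
    exact h rfl
  -- replace each branch by the segment spanned by its intersection with the support
  have hseg (τ : F') := hT.exists_segment_superset_inter (hF τ (Finset.mem_filter.1 τ.2).1) hy
    (Finset.mem_filter.1 τ.2).2
  choose m M hmM hm hsub hcov using hseg
  set s : F' → Set ℕ := fun τ => {k | le (m τ) k ∧ le k (M τ)}
  have hsτ (τ : F') : segNorm y (s τ) = segNorm y τ := by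
    refine segNorm_congr (subset_antisymm ?_ ?_)
    · exact fun k ⟨hk, hky⟩ => ⟨hsub τ hk, hky⟩
    · exact fun k ⟨hk, hky⟩ => ⟨hcov τ ⟨hk, hky⟩, hky⟩
  have hs : Pairwise (Disjoint on s) := by
    intro τ τ' hne
    have hF := hdisj (Finset.mem_filter.1 τ.2).1 (Finset.mem_filter.1 τ'.2).1
      (Subtype.coe_injective.ne hne)
    exact hT.disjoint_segments (fun h => disjoint_left.1 hF (hm τ) ⟨hsub τ' h, (hm τ).2⟩)
      (fun h => disjoint_left.1 hF ⟨hsub τ h, (hm τ').2⟩ (hm τ'))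
  calc ∑ τ ∈ F, segNorm y τ ^ p = ∑ τ : F', segNorm y (s τ) ^ p := by
        rw [← hsum, ← Finset.sum_coe_sort F']
        simp_rw [hsτ]
    _ ≤ jtNorm le p y ^ p :=
        sum_segNorm_rpow_le_jtNorm_rpow hp hy (fun τ => ⟨m τ, M τ, hmM τ, rfl⟩) hs

end JTNorm

theorem IsBlockSeq.eventually_disjoint_support {x : ℕ → ℕ → ℝ} (hx : IsBlockSeq x)
    (hne : ∀ n, (support (x n)).Nonempty) {U : Set ℕ} (hU : U.Finite) :
    ∀ᶠ n in atTop, Disjoint (support (x n)) U := by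
  choose ι hι using hne
  have hstep (n : ℕ) (j : ℕ) (hj : j ∈ support (x (n + 1))) : ι n < j := hx.2 n _ _ (hι n) hj
  have hmono : StrictMono ι := strictMono_nat_of_lt_succ fun n => hstep n _ (hι (n + 1))
  obtain ⟨B, hB⟩ := hU.bddAbove
  filter_upwards [eventually_gt_atTop B] with n hn
  obtain ⟨n, rfl⟩ : ∃ k, n = k + 1 := ⟨n - 1, by omega⟩
  refine disjoint_left.2 fun j hj hjU => ?_
  have : n ≤ ι n := hmono.le_apply
  have := hstep n j hj
  have := hB hjU
  omega

section Branches

variable {le : ℕ → ℕ → Prop} {p : ℝ} {x : ℕ → ℕ → ℝ}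

theorem jtNorm_indicator_nonneg (hp : 2 ≤ p) {y : ℕ → ℝ} (hy : (support y).Finite) (τ : Set ℕ) :
    0 ≤ jtNorm le p (τ.indicator y) :=
  jtNorm_nonneg hp (by rw [support_indicator]; exact hy.inter_of_right τ)

theorem jtNorm_indicator_mem_Icc (hT : IsJTTree le) (hp : 2 ≤ p) {y : ℕ → ℝ}
    (hy : (support y).Finite) (hy1 : jtNorm le p y = 1) {τ : Set ℕ} (hτ : IsBranch le τ) :
    jtNorm le p (τ.indicator y) ∈ Icc 0 1 := by
  refine ⟨jtNorm_indicator_nonneg hp hy τ, ?_⟩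
  have := sum_segNorm_rpow_le_jtNorm_rpow_of_isBranch hT hp hy (F := {τ}) (by simpa using hτ)
    (by simp)
  rw [Finset.sum_singleton, hy1, Real.one_rpow] at this
  have hp0 : 0 < p := by linarith
  refine (jtNorm_indicator_le_segNorm hp hy τ).trans ?_
  rwa [← Real.rpow_le_rpow_iff (segNorm_nonneg y τ) zero_le_one hp0, Real.one_rpow]

theorem eventuallyInLpBall_jtNorm_indicator (hT : IsJTTree le) (hp : 2 ≤ p) (hx : IsBlockSeq x)
    (hnorm : ∀ n, jtNorm le p (x n) = 1) :
    EventuallyInLpBall p {τ | IsBranch le τ} fun n τ => jtNorm le p (τ.indicator (x n)) := by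
  intro F hF
  -- eventually the supports avoid all pairwise intersections of the branches in `F`
  set U := ⋃ q ∈ F.offDiag, q.1 ∩ q.2
  have hU : U.Finite := F.offDiag.finite_toSet.biUnion fun q hq => by
    obtain ⟨h1, h2, hne⟩ := Finset.mem_offDiag.1 hq
    exact hT.inter_branch_finite (hF h1) (hF h2) hne
  have hne (n : ℕ) : (support (x n)).Nonempty :=
    support_nonempty_of_jtNorm_ne_zero hp (by rw [hnorm]; exact one_ne_zero)
  filter_upwards [hx.eventually_disjoint_support hne hU] with n hn
  have hdisj : (F : Set (Set ℕ)).PairwiseDisjoint (· ∩ support (x n)) := by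
    intro τ hτ τ' hτ' hne'
    refine disjoint_left.2 fun k hk hk' => disjoint_left.1 hn hk.2 ?_
    exact mem_biUnion (x := (τ, τ')) (Finset.mem_offDiag.2 ⟨hτ, hτ', hne'⟩) ⟨hk.1, hk'.1⟩
  calc ∑ τ ∈ F, jtNorm le p (τ.indicator (x n)) ^ p ≤ ∑ τ ∈ F, segNorm (x n) τ ^ p :=
        Finset.sum_le_sum fun τ _ => Real.rpow_le_rpow (jtNorm_indicator_nonneg hp (hx.1 n) τ)
          (jtNorm_indicator_le_segNorm hp (hx.1 n) τ) (by linarith)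
    _ ≤ jtNorm le p (x n) ^ p := sum_segNorm_rpow_le_jtNorm_rpow_of_isBranch hT hp (hx.1 n) hF hdisj
    _ = 1 := by rw [hnorm, Real.one_rpow]

end Branches

theorem stmt5 (le : ℕ → ℕ → Prop) (hT : IsJTTree le) (p : ℝ) (hp : 2 < p)
    (x : ℕ → ℕ → ℝ) (hblock : IsBlockSeq x)
    (hnorm : ∀ n, jtNorm le p (x n) = 1) :
    ∃ l : ℕ → ℕ, StrictMono l ∧ ∃ (N : Set ℕ) (c : ℕ → ℝ) (σ : ℕ → Set ℕ),
      AdmitsLpVector le p (fun n => x (l n)) N c σ := by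
  have hp0 : 0 ≤ p := by linarith
  have hball := eventuallyInLpBall_jtNorm_indicator hT hp.le hblock hnorm
  have hu (n : ℕ) (τ : Set ℕ) (hτ : IsBranch le τ) :=
    jtNorm_indicator_mem_Icc hT hp.le (hblock.1 n) (hnorm n) hτ
  obtain ⟨l, hl, c, hc⟩ := hball.exists_subseq_tendsto hp0 hu
  obtain ⟨N, hN, σ, hinj, himg, hanti, hsum⟩ := exists_antitoneOn_enum_of_sum_rpow_le_one hp0
    fun F hF => hball.sum_rpow_le_one_of_tendsto hp0 hl.tendsto_atTop hc hF
  have hσ (i : ℕ) (hi : i ∈ N) : IsBranch le (σ i) ∧ 0 < c (σ i) := by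
    have := mem_image_of_mem σ hi
    rwa [himg] at this
  refine ⟨l, hl, N, c ∘ σ, σ, hN, fun i hi => (hσ i hi).1, fun i hi j hj hij => hinj.ne hi hj hij,
    hanti, hsum, fun i hi => ⟨(hσ i hi).2, hc _ (hσ i hi).1⟩, fun τ hτ hτσ => ?_⟩
  have hcτ : c τ = 0 := by
    refine le_antisymm (not_lt.1 fun hpos => ?_) (ge_of_tendsto' (hc τ hτ) fun n => (hu _ τ hτ).1)
    obtain ⟨i, hi, rfl⟩ : τ ∈ σ '' N := himg ▸ ⟨hτ, hpos⟩
    exact hτσ i hi rfl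
  simpa [hcτ] using hc τ hτ
end

section
/- Let (x_n) be a normalized block sequence in (c₀₀, ‖·‖_{JT_{2,p}}) admitting the non-zero ℓ_p-vector (c_i)_{i∈ℕ} with associated branches (σ_i)_{i∈ℕ}. Let (F_n) be a sequence of finite subsets of ℕ with max F_n < min F_{n+1} for all n, and for each n let (a_k)_{k∈F_n} be reals with ∑_{k∈F_n} a_k² = 1, and set y_n = ∑_{k∈F_n} a_k x_k. Then (y_n) admits (c_i)_{i∈ℕ} as its ℓ_p-vector with the same associated branches (σ_i)_{i∈ℕ}. -/
open Set Filter Topology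

/-! On a `⪯`-chain `τ` the `JT_{2,p}` norm of a vector supported on `τ` is its `ℓ_2` norm: the
support lies in a single segment, and for `p ≥ 2` splitting it into several segments can only
decrease `(∑ ‖x‖_{s_k}^p)^{1/p}`. The `x_k` have disjoint supports, so
`‖y_n|_τ‖² = ∑_{k ∈ F_n} a_k² ‖x_k|_τ‖²` is a convex combination of the numbers `‖x_k|_τ‖²`
with `k ≥ n`, and therefore has the same limit as they do. Taking `τ = σ_i`, and then `τ` any
other branch, transfers the `ℓ_p`-vector from `(x_n)` to `(y_n)`. -/

section ChainNorm

variable {le : ℕ → ℕ → Prop} {p : ℝ}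

lemma sq_segNorm (x : ℕ → ℝ) (s : Set ℕ) :
    segNorm x s ^ 2 = ∑' j, s.indicator (fun j => x j ^ 2) j :=
  Real.sq_sqrt (tsum_nonneg fun j => Set.indicator_nonneg (fun j _ => sq_nonneg (x j)) j)

lemma segNorm_eq_of_support_subset {x : ℕ → ℝ} {s : Set ℕ} (hs : Function.support x ⊆ s) :
    segNorm x s = Real.sqrt (∑' j, x j ^ 2) := by
  have hsupp : Function.support (fun j => x j ^ 2) ⊆ s := fun j hj =>
    hs (by simpa using hj)
  rw [segNorm, Set.indicator_eq_self.mpr hsupp]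

lemma sum_sq_segNorm_le {x : ℕ → ℝ} (hx : (Function.support x).Finite) {n : ℕ}
    (s : Fin n → Set ℕ) (hdisj : ∀ k l, k ≠ l → Disjoint (s k) (s l)) :
    ∑ k, segNorm x (s k) ^ 2 ≤ ∑' j, x j ^ 2 := by
  set f : ℕ → ℝ := fun j => x j ^ 2
  have hfin : ∀ t : Set ℕ, (Function.support (t.indicator f)).Finite := fun t =>
    hx.subset fun j hj => by simp_all [f, Set.support_indicator]
  have hsum : ∀ t : Set ℕ, Summable (t.indicator f) := fun t =>
    summable_of_hasFiniteSupport (hfin t)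
  have hpd : ((Finset.univ : Finset (Fin n)) : Set (Fin n)).PairwiseDisjoint s :=
    fun k _ l _ hkl => hdisj k l hkl
  calc ∑ k, segNorm x (s k) ^ 2 = ∑ k, ∑' j, (s k).indicator f j := by
        simp only [sq_segNorm, f]
    _ = ∑' j, (⋃ k ∈ Finset.univ, s k).indicator f j := by
        rw [Finset.indicator_biUnion _ _ hpd, ← Summable.tsum_finsetSum fun k _ => hsum (s k)]
    _ ≤ ∑' j, f j :=
        Summable.tsum_le_tsum (Set.indicator_le_self' fun j _ => sq_nonneg (x j)) (hsum _)
          (by simpa using hsum Set.univ)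

lemma rpow_sum_rpow_le_of_sum_sq_le {ι : Type*} (s : Finset ι) {u : ι → ℝ} (hu : ∀ i, 0 ≤ u i)
    (hp : 2 ≤ p) {B : ℝ} (hB : 0 ≤ B) (h : ∑ i ∈ s, u i ^ 2 ≤ B ^ 2) :
    (∑ i ∈ s, u i ^ p) ^ (1 / p) ≤ B := by
  have hp0 : 0 < p := by linarith
  have hpow_split : ∀ t : ℝ, 0 ≤ t → t ^ p = t ^ (p - 2) * t ^ 2 := fun t ht => by
    rw [← Real.rpow_natCast t 2, ← Real.rpow_add' ht (by norm_num; linarith)]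
    norm_num
  have hle : ∀ i ∈ s, u i ≤ B := fun i hi =>
    (pow_le_pow_iff_left₀ (hu i) hB two_ne_zero).mp
      ((Finset.single_le_sum (fun j _ => sq_nonneg (u j)) hi).trans h)
  have hsum : ∑ i ∈ s, u i ^ p ≤ B ^ p :=
    calc ∑ i ∈ s, u i ^ p ≤ ∑ i ∈ s, B ^ (p - 2) * u i ^ 2 :=
          Finset.sum_le_sum fun i hi => by
            rw [hpow_split _ (hu i)]
            gcongr
            · exact hu i
            · exact hle i hi
      _ = B ^ (p - 2) * ∑ i ∈ s, u i ^ 2 := by rw [Finset.mul_sum]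
      _ ≤ B ^ (p - 2) * B ^ 2 := by gcongr
      _ = B ^ p := (hpow_split B hB).symm
  rw [one_div, Real.rpow_inv_le_iff_of_pos
    (Finset.sum_nonneg fun i _ => Real.rpow_nonneg (hu i) p) hB hp0]
  exact hsum

lemma rpow_sum_segNorm_le_s7 {x : ℕ → ℝ} (hx : (Function.support x).Finite) (hp : 2 ≤ p)
    {n : ℕ} (s : Fin n → Set ℕ) (hdisj : ∀ k l, k ≠ l → Disjoint (s k) (s l)) :
    (∑ k, segNorm x (s k) ^ p) ^ (1 / p) ≤ Real.sqrt (∑' j, x j ^ 2) :=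
  rpow_sum_rpow_le_of_sum_sq_le _ (fun _ => Real.sqrt_nonneg _) hp (Real.sqrt_nonneg _) <| by
    rw [Real.sq_sqrt (tsum_nonneg fun j => sq_nonneg (x j))]
    exact sum_sq_segNorm_le hx s hdisj

lemma jtNorm_le_sqrt_tsum_sq {x : ℕ → ℝ} (hx : (Function.support x).Finite) (hp : 2 ≤ p) :
    jtNorm le p x ≤ Real.sqrt (∑' j, x j ^ 2) :=
  csSup_le ⟨_, 0, Fin.elim0, fun k => k.elim0, fun k => k.elim0, rfl⟩
    fun _ ⟨_, s, _, hdisj, hr⟩ => hr ▸ rpow_sum_segNorm_le_s7 hx hp s hdisj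

lemma segNorm_le_jtNorm {x : ℕ → ℝ} (hx : (Function.support x).Finite) (hp : 2 ≤ p)
    {s : Set ℕ} (hs : IsSegment le s) : segNorm x s ≤ jtNorm le p x := by
  refine le_csSup ⟨_, fun _ ⟨_, t, _, hdisj, hr⟩ => hr ▸ rpow_sum_segNorm_le_s7 hx hp t hdisj⟩
    ⟨1, fun _ => s, fun _ => hs, fun k l hkl => absurd (Subsingleton.elim k l) hkl, ?_⟩
  rw [Fin.sum_univ_one, one_div]
  exact (Real.rpow_rpow_inv (Real.sqrt_nonneg _) (by linarith)).symm

lemma IsJTTree.le_of_isChain {t : Set ℕ} (hT : IsJTTree le) (ht : IsChain le t) {i j : ℕ}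
    (hi : i ∈ t) (hj : j ∈ t) (hij : i ≤ j) : le i j := by
  have : Std.Refl le := ⟨hT.refl⟩
  rcases ht.total hi hj with h | h
  · exact h
  · rw [le_antisymm hij (hT.compat h)]
    exact hT.refl j

lemma IsJTTree.exists_isSegment_superset {t : Set ℕ} (hT : IsJTTree le) (ht : t.Finite)
    (hc : IsChain le t) : ∃ s, IsSegment le s ∧ t ⊆ s := by
  rcases t.eq_empty_or_nonempty with rfl | hne
  · exact ⟨_, ⟨0, 0, hT.refl 0, rfl⟩, Set.empty_subset _⟩
  have hmin := Nat.sInf_mem hne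
  have hmax := Nat.sSup_mem hne ht.bddAbove
  refine ⟨_, ⟨sInf t, sSup t, hT.le_of_isChain hc hmin hmax (Nat.sInf_le hmax), rfl⟩,
    fun j hj => ⟨?_, ?_⟩⟩
  · exact hT.le_of_isChain hc hmin hj (Nat.sInf_le hj)
  · exact hT.le_of_isChain hc hj hmax (le_csSup ht.bddAbove hj)

theorem IsJTTree.jtNorm_eq_of_isChain (hT : IsJTTree le) (hp : 2 ≤ p) {x : ℕ → ℝ}
    (hx : (Function.support x).Finite) (hc : IsChain le (Function.support x)) :
    jtNorm le p x = Real.sqrt (∑' j, x j ^ 2) := by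
  obtain ⟨s, hs, hsub⟩ := hT.exists_isSegment_superset hx hc
  refine le_antisymm (jtNorm_le_sqrt_tsum_sq hx hp) ?_
  rw [← segNorm_eq_of_support_subset hsub]
  exact segNorm_le_jtNorm hx hp hs

end ChainNorm

lemma sq_sum_eq_sum_sq_of_pairwiseDisjoint {ι α : Type*} {F : Finset ι} {f : ι → α → ℝ}
    (hdisj : (F : Set ι).PairwiseDisjoint fun k => Function.support (f k)) (j : α) :
    (∑ k ∈ F, f k j) ^ 2 = ∑ k ∈ F, f k j ^ 2 := by
  by_cases hj : ∃ k ∈ F, f k j ≠ 0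
  · obtain ⟨k, hk, hkj⟩ := hj
    have hzero : ∀ l ∈ F, l ≠ k → f l j = 0 := fun l hl hlk => by
      by_contra hlj
      exact Set.disjoint_left.mp (hdisj hl hk hlk) hlj hkj
    rw [Finset.sum_eq_single_of_mem k hk hzero,
      Finset.sum_eq_single_of_mem k hk fun l hl hlk => by simp [hzero l hl hlk]]
  · push Not at hj
    rw [Finset.sum_eq_zero hj, Finset.sum_eq_zero fun k hk => by rw [hj k hk, sq, mul_zero],
      sq, mul_zero]

lemma tsum_sq_sum_eq_sum_tsum_sq {ι : Type*} {F : Finset ι} {f : ι → ℕ → ℝ}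
    (hfin : ∀ k, (Function.support (f k)).Finite)
    (hdisj : (F : Set ι).PairwiseDisjoint fun k => Function.support (f k)) :
    ∑' j, (∑ k ∈ F, f k j) ^ 2 = ∑ k ∈ F, ∑' j, f k j ^ 2 := by
  simp_rw [sq_sum_eq_sum_sq_of_pairwiseDisjoint hdisj]
  exact Summable.tsum_finsetSum fun k _ =>
    summable_of_hasFiniteSupport ((hfin k).subset fun j hj => by simpa using hj)

lemma tendsto_sum_mul_of_tendsto {F : ℕ → Finset ℕ} (hF : ∀ n, ∀ k ∈ F n, n ≤ k) {w : ℕ → ℝ}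
    (hw0 : ∀ k, 0 ≤ w k) (hw : ∀ n, ∑ k ∈ F n, w k = 1) {g : ℕ → ℝ} {L : ℝ}
    (hg : Tendsto g atTop (𝓝 L)) :
    Tendsto (fun n => ∑ k ∈ F n, w k * g k) atTop (𝓝 L) := by
  rw [Metric.tendsto_atTop] at hg ⊢
  intro ε hε
  obtain ⟨N, hN⟩ := hg (ε / 2) (half_pos hε)
  refine ⟨N, fun n hn => ?_⟩
  have hdiff : ∑ k ∈ F n, w k * g k - L = ∑ k ∈ F n, w k * (g k - L) := by
    simp only [mul_sub, Finset.sum_sub_distrib, ← Finset.sum_mul, hw n, one_mul]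
  rw [Real.dist_eq, hdiff]
  calc |∑ k ∈ F n, w k * (g k - L)| ≤ ∑ k ∈ F n, w k * |g k - L| := by
        refine (Finset.abs_sum_le_sum_abs _ _).trans_eq (Finset.sum_congr rfl fun k _ => ?_)
        rw [abs_mul, abs_of_nonneg (hw0 k)]
    _ ≤ ∑ k ∈ F n, w k * (ε / 2) := by
        gcongr with k hk
        · exact hw0 k
        · exact (hN k (hn.trans (hF n k hk))).le
    _ < ε := by rw [← Finset.sum_mul, hw n]; linarith

lemma IsBlockSeq.lt_of_lt {x : ℕ → ℕ → ℝ} (hx : IsBlockSeq x)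
    (hne : ∀ n, (Function.support (x n)).Nonempty) {k l : ℕ} (hkl : k < l) {i j : ℕ}
    (hi : x k i ≠ 0) (hj : x l j ≠ 0) : i < j := by
  induction l, hkl using Nat.le_induction generalizing j with
  | base => exact hx.2 k i j hi hj
  | succ l hkl ih =>
    obtain ⟨m, hm⟩ := hne l
    exact (ih hm).trans (hx.2 l m j hm hj)

lemma IsBlockSeq.pairwise_disjoint_support {x : ℕ → ℕ → ℝ} (hx : IsBlockSeq x)
    (hne : ∀ n, (Function.support (x n)).Nonempty) :
    Pairwise fun k l => Disjoint (Function.support (x k)) (Function.support (x l)) := by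
  intro k l hkl
  refine Set.disjoint_left.mpr fun j hk hl => ?_
  rcases hkl.lt_or_gt with h | h
  · exact lt_irrefl j (hx.lt_of_lt hne h hk hl)
  · exact lt_irrefl j (hx.lt_of_lt hne h hl hk)

lemma le_of_mem_of_forall_lt_succ {F : ℕ → Finset ℕ} (hFne : ∀ n, (F n).Nonempty)
    (hF : ∀ n, ∀ i ∈ F n, ∀ j ∈ F (n + 1), i < j) : ∀ n, ∀ k ∈ F n, n ≤ k
  | 0, _, _ => Nat.zero_le _
  | n + 1, k, hk => by
    obtain ⟨i, hi⟩ := hFne n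
    exact (le_of_mem_of_forall_lt_succ hFne hF n i hi).trans_lt (hF n i hi k hk)

section BlockCombination

variable {le : ℕ → ℕ → Prop} {p : ℝ}

lemma IsJTTree.support_nonempty_of_jtNorm_ne_zero (hT : IsJTTree le) (hp : 2 ≤ p) {x : ℕ → ℝ}
    (hx : jtNorm le p x ≠ 0) : (Function.support x).Nonempty := by
  rw [Set.nonempty_iff_ne_empty]
  intro hempty
  have hzero : x = 0 := Function.support_eq_empty_iff.mp hempty
  apply hx
  rw [hT.jtNorm_eq_of_isChain hp (hempty ▸ Set.finite_empty) (hempty ▸ Set.pairwise_empty _),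
    hzero]
  simp

theorem IsJTTree.jtNorm_sum_eq_sqrt (hT : IsJTTree le) (hp : 2 ≤ p) {τ : Set ℕ}
    (hτ : IsChain le τ) {z : ℕ → ℕ → ℝ} (hfin : ∀ k, (Function.support (z k)).Finite)
    (hsupp : ∀ k, Function.support (z k) ⊆ τ)
    (hdisj : Pairwise fun k l => Disjoint (Function.support (z k)) (Function.support (z l)))
    (F : Finset ℕ) (a : ℕ → ℝ) :
    jtNorm le p (fun j => ∑ k ∈ F, a k * z k j)
      = Real.sqrt (∑ k ∈ F, a k ^ 2 * jtNorm le p (z k) ^ 2) := by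
  have hsupp_mul : ∀ k, Function.support (fun j => a k * z k j) ⊆ Function.support (z k) :=
    fun k => Function.support_mul_subset_right _ _
  have hsum_supp := Finset.support_sum F fun k j => a k * z k j
  rw [hT.jtNorm_eq_of_isChain hp
      ((F.finite_toSet.biUnion fun k _ => hfin k).subset
        (hsum_supp.trans (Set.biUnion_mono subset_rfl fun k _ => hsupp_mul k)))
      (hτ.mono (hsum_supp.trans (Set.iUnion₂_subset fun k _ => (hsupp_mul k).trans (hsupp k)))),
    tsum_sq_sum_eq_sum_tsum_sq (fun k => (hfin k).subset (hsupp_mul k))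
      (Set.PairwiseDisjoint.mono (hdisj.set_pairwise _) hsupp_mul)]
  congr 1
  refine Finset.sum_congr rfl fun k _ => ?_
  rw [hT.jtNorm_eq_of_isChain hp (hfin k) (hτ.mono (hsupp k)),
    Real.sq_sqrt (tsum_nonneg fun j => sq_nonneg _), ← tsum_mul_left]
  simp_rw [mul_pow]

theorem IsJTTree.tendsto_jtNorm_indicator_of_tendsto (hT : IsJTTree le) (hp : 2 ≤ p)
    {x : ℕ → ℕ → ℝ} (hfin : ∀ k, (Function.support (x k)).Finite)
    (hdisj : Pairwise fun k l => Disjoint (Function.support (x k)) (Function.support (x l)))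
    {F : ℕ → Finset ℕ} (hF : ∀ n, ∀ k ∈ F n, n ≤ k) {a : ℕ → ℝ}
    (ha : ∀ n, ∑ k ∈ F n, a k ^ 2 = 1) {y : ℕ → ℕ → ℝ}
    (hy : ∀ n, y n = fun j => ∑ k ∈ F n, a k * x k j) {τ : Set ℕ} (hτ : IsChain le τ)
    {L : ℝ} (hL : 0 ≤ L) (hxL : Tendsto (fun n => jtNorm le p (τ.indicator (x n))) atTop (𝓝 L)) :
    Tendsto (fun n => jtNorm le p (τ.indicator (y n))) atTop (𝓝 L) := by
  have hrestrict : ∀ n, τ.indicator (y n) = fun j => ∑ k ∈ F n, a k * τ.indicator (x k) j := by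
    intro n
    funext j
    by_cases hj : j ∈ τ <;> simp [hy, hj]
  have hsum := (tendsto_sum_mul_of_tendsto hF (fun k => sq_nonneg (a k)) ha (hxL.pow 2)).sqrt
  rw [Real.sqrt_sq hL] at hsum
  have hsupp : ∀ k, Function.support (τ.indicator (x k)) ⊆ Function.support (x k) := fun k =>
    Set.support_indicator (s := τ) (f := x k) ▸ Set.inter_subset_right
  refine hsum.congr fun n => ?_
  rw [hrestrict, hT.jtNorm_sum_eq_sqrt hp hτ (fun k => (hfin k).subset (hsupp k))
    (fun k => Set.support_indicator_subset)
    (fun k l hkl => (hdisj hkl).mono (hsupp k) (hsupp l))]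

end BlockCombination

theorem stmt7 (le : ℕ → ℕ → Prop) (hT : IsJTTree le) (p : ℝ) (hp : 2 < p)
    (x : ℕ → ℕ → ℝ) (hblock : IsBlockSeq x)
    (hnorm : ∀ n, jtNorm le p (x n) = 1)
    (c : ℕ → ℝ) (σ : ℕ → Set ℕ)
    (hvec : AdmitsLpVector le p x Set.univ c σ)
    (F : ℕ → Finset ℕ) (hFne : ∀ n, (F n).Nonempty)
    (hF : ∀ n, ∀ i ∈ F n, ∀ j ∈ F (n + 1), i < j)
    (a : ℕ → ℝ) (ha : ∀ n, ∑ k ∈ F n, a k ^ 2 = 1)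
    (y : ℕ → ℕ → ℝ) (hy : ∀ n, y n = fun j => ∑ k ∈ F n, a k * x k j) :
    AdmitsLpVector le p y Set.univ c σ := by
  obtain ⟨hN, hbranch, hdistinct, hdecr, hsum, hconv, hnull⟩ := hvec
  have hne : ∀ n, (Function.support (x n)).Nonempty := fun n =>
    hT.support_nonempty_of_jtNorm_ne_zero hp.le (by rw [hnorm n]; exact one_ne_zero)
  have htransfer := fun {τ} (hτ : IsChain le τ) {L} (hL : 0 ≤ L) =>
    hT.tendsto_jtNorm_indicator_of_tendsto hp.le hblock.1 (hblock.pairwise_disjoint_support hne)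
      (le_of_mem_of_forall_lt_succ hFne hF) ha hy hτ hL
  exact ⟨hN, hbranch, hdistinct, hdecr, hsum,
    fun i hi => ⟨(hconv i hi).1, htransfer (hbranch i hi).1 (hconv i hi).1.le (hconv i hi).2⟩,
    fun τ hτ hτσ => htransfer hτ.1 le_rfl (hnull τ hτ hτσ)⟩
end
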